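/- arXiv:2006.02844 — 2 statements merged into one kernel-verified Lean document; each statement's English description precedes it below -/
import Mathlib

section
/- Let L be a 2-dimensional simplicial complex and L^𝔡 the Dranishnikov subdivision obtained by subdividing each edge into two edges and each 2-simplex into 13 triangles as in Dranishnikov's construction. Then L^𝔡 is a flag simplicial complex with no empty 4-cycle (no-□): every 4-cycle in the 1-skeleton of L^𝔡 has a pair of opposite vertices joined by an edge. -/
/-- An abstract simplicial complex on a vertex type `V`. -/
structure ASC (V : Type) where
  faces : Set (Finset V)
  down_closed : ∀ s ∈ faces, ∀ t : Finset V, t ⊆ s → t.Nonempty → t ∈ faces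
  nonempty_of_mem : ∀ s ∈ faces, s.Nonempty

variable {V : Type} [DecidableEq V]

/-- A complex is flag if every nonempty set of vertices of the complex that is pairwise
joined by edges spans a simplex. -/
def ASC.Flag (K : ASC V) : Prop :=
  ∀ s : Finset V, s.Nonempty → (∀ x ∈ s, ({x} : Finset V) ∈ K.faces) →
    (∀ x ∈ s, ∀ y ∈ s, x ≠ y → ({x, y} : Finset V) ∈ K.faces) → s ∈ K.faces

/-- The no-□ condition: every 4-cycle in the 1-skeleton has a chord, i.e. no empty
4-cycle is a full subcomplex. -/
def ASC.NoSquare (K : ASC V) : Prop :=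
  ∀ a b c d : V, a ≠ b → b ≠ c → c ≠ d → d ≠ a → a ≠ c → b ≠ d →
    ({a, b} : Finset V) ∈ K.faces → ({b, c} : Finset V) ∈ K.faces →
    ({c, d} : Finset V) ∈ K.faces → ({d, a} : Finset V) ∈ K.faces →
    ({a, c} : Finset V) ∈ K.faces ∨ ({b, d} : Finset V) ∈ K.faces

/-- Vertices of the Dranishnikov subdivision: original vertices, midpoints of edges
(indexed by unordered pairs), and interior vertices of 2-simplices (indexed by a
2-simplex together with the corner it is close to). -/
abbrev DVert (V : Type) : Type := V ⊕ Sym2 V ⊕ (Finset V × V)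

def va (a : V) : DVert V := Sum.inl a
def vm (e : Sym2 V) : DVert V := Sum.inr (Sum.inl e)
def vi (t : Finset V) (x : V) : DVert V := Sum.inr (Sum.inr (t, x))

/-- The maximal faces of the Dranishnikov subdivision `L^𝔡` of a 2-complex `L`:
subdivided edges, and for each 2-simplex `t` the triangles of Dranishnikov's pattern
(two corner triangles at each corner, one triangle on each subdivided edge joining the
two nearby interior vertices, and the central triangle of interior vertices). -/
def draGen (L : ASC V) : Set (Finset (DVert V)) :=
  {q | (∃ a : V, ({a} : Finset V) ∈ L.faces ∧ q = {va a})
    ∨ (∃ a b : V, ({a, b} : Finset V) ∈ L.faces ∧ a ≠ b ∧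
        (q = {va a, vm s(a, b)} ∨ q = {va b, vm s(a, b)}))
    ∨ (∃ t ∈ L.faces, t.card = 3 ∧
        ((∃ x ∈ t, ∃ y ∈ t, x ≠ y ∧ q = {va x, vi t x, vm s(x, y)})
        ∨ (∃ x ∈ t, ∃ y ∈ t, x ≠ y ∧ q = {vi t x, vi t y, vm s(x, y)})
        ∨ (∃ x ∈ t, ∃ y ∈ t, ∃ z ∈ t, x ≠ y ∧ y ≠ z ∧ x ≠ z ∧
            q = {vi t x, vi t y, vi t z})))}

/-- The Dranishnikov subdivision `L^𝔡` of a 2-dimensional complex `L`. -/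
def dra (L : ASC V) : ASC (DVert V) where
  faces := {q | q.Nonempty ∧ ∃ p ∈ draGen L, q ⊆ p}
  down_closed := by
    rintro q ⟨-, p, hp, hqp⟩ t htq htne
    exact ⟨htne, p, hp, htq.trans hqp⟩
  nonempty_of_mem := fun q hq => hq.1

/-!
The 1-skeleton of `L^𝔡` can be read off the generating triangles: an original vertex is
adjacent exactly to the midpoints of its edges and to the interior vertices next to it, no two
original vertices and no two midpoints are adjacent, and two interior vertices are adjacent
exactly when they lie in the same 2-simplex. Hence every triangle of the 1-skeleton is one of
Dranishnikov's triangles, and no vertex is adjacent to all three vertices of such a triangle,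
so `L^𝔡` is flag. For no-□, take a chordless 4-cycle and look at the kinds of its vertices up
to the dihedral symmetry of the square. Three consecutive interior vertices lie in one
2-simplex, so the outer two are adjacent; in each remaining pattern the adjacencies force two
opposite vertices to coincide or to be adjacent (for instance, the only common neighbour of two
distinct original vertices `x`, `z` is the midpoint of `xz`).
-/

lemma Finset.eq_triple_of_card_eq_three {α : Type*} [DecidableEq α] {s : Finset α}
    (hs : s.card = 3) {x y z : α} (hx : x ∈ s) (hy : y ∈ s) (hz : z ∈ s)
    (hxy : x ≠ y) (hxz : x ≠ z) (hyz : y ≠ z) : s = {x, y, z} :=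
  (Finset.eq_of_subset_of_card_le (by simp [Finset.insert_subset_iff, hx, hy, hz])
    (by rw [hs, Finset.card_eq_three.2 ⟨x, y, z, hxy, hxz, hyz, rfl⟩])).symm

lemma Sym2.eq_of_mk_eq_mk_of_ne {α : Type*} {a b c d : α} (h : s(a, b) = s(c, d))
    (hac : a ≠ c) : b = c := by
  rcases Sym2.eq_iff.1 h with ⟨h', -⟩ | ⟨-, h'⟩
  exacts [absurd h' hac, h']

namespace ASC

def IsTriangle {α : Type} (K : ASC α) (t : Finset α) : Prop :=
  t ∈ K.faces ∧ t.card = 3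

lemma IsTriangle.exists_ne {α : Type} {K : ASC α} {t : Finset α} (ht : K.IsTriangle t)
    (x : α) : ∃ y ∈ t, y ≠ x := by
  by_contra! h
  have := Finset.card_le_card (fun z hz => Finset.mem_singleton.2 (h z hz) : t ⊆ {x})
  simp [ht.2] at this

lemma IsTriangle.eq_of_three_mem {α : Type} [DecidableEq α] {K : ASC α} {t t' : Finset α}
    (ht : K.IsTriangle t) (ht' : K.IsTriangle t') {x y z : α} (hx : x ∈ t) (hy : y ∈ t)
    (hz : z ∈ t) (hx' : x ∈ t') (hy' : y ∈ t') (hz' : z ∈ t') (hxy : x ≠ y) (hxz : x ≠ z)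
    (hyz : y ≠ z) : t = t' :=
  (Finset.eq_triple_of_card_eq_three ht.2 hx hy hz hxy hxz hyz).trans
    (Finset.eq_triple_of_card_eq_three ht'.2 hx' hy' hz' hxy hxz hyz).symm

lemma pair_mem_of_mem (K : ASC V) {s : Finset V} (hs : s ∈ K.faces) {x y : V} (hx : x ∈ s)
    (hy : y ∈ s) : ({x, y} : Finset V) ∈ K.faces :=
  K.down_closed s hs _ (Finset.insert_subset hx (Finset.singleton_subset_iff.2 hy)) (by simp)

def skeleton (K : ASC V) : SimpleGraph V where
  Adj x y := x ≠ y ∧ ({x, y} : Finset V) ∈ K.faces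
  symm := ⟨fun x y h => ⟨h.1.symm, Finset.pair_comm x y ▸ h.2⟩⟩
  loopless := ⟨fun _ h => h.1 rfl⟩

lemma skeleton_adj (K : ASC V) {x y : V} :
    K.skeleton.Adj x y ↔ x ≠ y ∧ ({x, y} : Finset V) ∈ K.faces :=
  Iff.rfl

theorem flag_of_cliques (K : ASC V) (h3 : ∀ s, K.skeleton.IsNClique 3 s → s ∈ K.faces)
    (h4 : K.skeleton.CliqueFree 4) : K.Flag := by
  intro s hne hv he
  have hs : K.skeleton.IsClique (s : Set V) := fun x hx y hy hxy =>
    K.skeleton_adj.2 ⟨hxy, he x hx y hy hxy⟩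
  have hcard : s.card ≤ 3 := by
    by_contra! h
    obtain ⟨t, hts, ht⟩ := Finset.exists_subset_card_eq (Nat.succ_le_of_lt h)
    exact h4 t ⟨hs.subset (by simpa using hts), ht⟩
  obtain h1 | h2 | h3' : s.card = 1 ∨ s.card = 2 ∨ s.card = 3 := by
    have := hne.card_pos; omega
  · obtain ⟨x, rfl⟩ := Finset.card_eq_one.1 h1
    exact hv x (by simp)
  · obtain ⟨x, y, hxy, rfl⟩ := Finset.card_eq_two.1 h2
    exact he x (by simp) y (by simp) hxy
  · exact h3 s ⟨hs, h3'⟩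

end ASC

structure SimpleGraph.IsChordlessSquare {α : Type*} (G : SimpleGraph α) (a b c d : α) :
    Prop where
  adj_ab : G.Adj a b
  adj_bc : G.Adj b c
  adj_cd : G.Adj c d
  adj_da : G.Adj d a
  ne_ac : a ≠ c
  ne_bd : b ≠ d
  not_adj_ac : ¬ G.Adj a c
  not_adj_bd : ¬ G.Adj b d

namespace SimpleGraph.IsChordlessSquare

variable {α : Type*} {G : SimpleGraph α} {a b c d : α}

lemma rotate (h : G.IsChordlessSquare a b c d) : G.IsChordlessSquare b c d a :=
  ⟨h.adj_bc, h.adj_cd, h.adj_da, h.adj_ab, h.ne_bd, h.ne_ac.symm, h.not_adj_bd,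
    fun h' => h.not_adj_ac h'.symm⟩

lemma reflect (h : G.IsChordlessSquare a b c d) : G.IsChordlessSquare a d c b :=
  ⟨h.adj_da.symm, h.adj_cd.symm, h.adj_bc.symm, h.adj_ab.symm, h.ne_ac, h.ne_bd.symm,
    h.not_adj_ac, fun h' => h.not_adj_bd h'.symm⟩

end SimpleGraph.IsChordlessSquare

theorem ASC.noSquare_of_forall_not_isChordlessSquare (K : ASC V)
    (h : ∀ a b c d, ¬ K.skeleton.IsChordlessSquare a b c d) : K.NoSquare := by
  intro a b c d hab hbc hcd hda hac hbd eab ebc ecd eda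
  by_contra! hcon
  exact h a b c d ⟨⟨hab, eab⟩, ⟨hbc, ebc⟩, ⟨hcd, ecd⟩, ⟨hda, eda⟩, hac, hbd,
    fun h' => hcon.1 (K.skeleton_adj.1 h').2, fun h' => hcon.2 (K.skeleton_adj.1 h').2⟩

/-- Case analysis on a vertex that keeps `va`, `vm`, `vi` folded, unlike `rcases`. -/
@[elab_as_elim]
lemma DVert.casesOn' {W : Type} {motive : DVert W → Prop} (u : DVert W)
    (corner : ∀ a, motive (va a)) (mid : ∀ e, motive (vm e))
    (inner : ∀ t x, motive (vi t x)) : motive u := by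
  rcases u with a | e | ⟨t, x⟩
  exacts [corner a, mid e, inner t x]

section Adjacency

variable {L : ASC V}

lemma dra_adj_iff {u w : DVert V} :
    (dra L).skeleton.Adj u w ↔ u ≠ w ∧ ∃ p ∈ draGen L, u ∈ p ∧ w ∈ p := by
  constructor
  · rintro ⟨hne, -, p, hp, hsub⟩
    exact ⟨hne, p, hp, hsub (by simp), hsub (by simp)⟩
  · rintro ⟨hne, p, hp, hu, hw⟩
    exact ⟨hne, by simp, p, hp, Finset.insert_subset hu (Finset.singleton_subset_iff.2 hw)⟩

lemma halfEdge_mem_draGen {a b : V} (hab : ({a, b} : Finset V) ∈ L.faces) (hne : a ≠ b) :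
    ({va a, vm s(a, b)} : Finset (DVert V)) ∈ draGen L :=
  Or.inr (Or.inl ⟨a, b, hab, hne, Or.inl rfl⟩)

lemma corner_mem_draGen {t : Finset V} (ht : L.IsTriangle t) {x y : V} (hx : x ∈ t)
    (hy : y ∈ t) (hxy : x ≠ y) : ({va x, vi t x, vm s(x, y)} : Finset (DVert V)) ∈ draGen L :=
  Or.inr (Or.inr ⟨t, ht.1, ht.2, Or.inl ⟨x, hx, y, hy, hxy, rfl⟩⟩)

lemma side_mem_draGen {t : Finset V} (ht : L.IsTriangle t) {x y : V} (hx : x ∈ t)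
    (hy : y ∈ t) (hxy : x ≠ y) : ({vi t x, vi t y, vm s(x, y)} : Finset (DVert V)) ∈ draGen L :=
  Or.inr (Or.inr ⟨t, ht.1, ht.2, Or.inr (Or.inl ⟨x, hx, y, hy, hxy, rfl⟩)⟩)

lemma center_mem_draGen {t : Finset V} (ht : L.IsTriangle t) {x y z : V} (hx : x ∈ t)
    (hy : y ∈ t) (hz : z ∈ t) (hxy : x ≠ y) (hyz : y ≠ z) (hxz : x ≠ z) :
    ({vi t x, vi t y, vi t z} : Finset (DVert V)) ∈ draGen L :=
  Or.inr (Or.inr ⟨t, ht.1, ht.2, Or.inr (Or.inr ⟨x, hx, y, hy, z, hz, hxy, hyz, hxz, rfl⟩)⟩)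

lemma dra_not_adj_va_va {a b : V} : ¬ (dra L).skeleton.Adj (va a) (va b) := by
  rw [dra_adj_iff]
  rintro ⟨hne, p, hp, ha, hb⟩
  rcases hp with ⟨x, -, rfl⟩ | ⟨x, y, -, -, rfl | rfl⟩ |
    ⟨t, -, -, ⟨x, -, y, -, -, rfl⟩ | ⟨x, -, y, -, -, rfl⟩ | ⟨x, -, y, -, z, -, -, -, -, rfl⟩⟩ <;>
  simp_all [va, vm, vi]

lemma dra_not_adj_vm_vm {e f : Sym2 V} : ¬ (dra L).skeleton.Adj (vm e) (vm f) := by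
  rw [dra_adj_iff]
  rintro ⟨hne, p, hp, he, hf⟩
  rcases hp with ⟨x, -, rfl⟩ | ⟨x, y, -, -, rfl | rfl⟩ |
    ⟨t, -, -, ⟨x, -, y, -, -, rfl⟩ | ⟨x, -, y, -, -, rfl⟩ | ⟨x, -, y, -, z, -, -, -, -, rfl⟩⟩ <;>
  simp_all [va, vm, vi]

lemma dra_adj_va_vm_iff {a : V} {e : Sym2 V} :
    (dra L).skeleton.Adj (va a) (vm e) ↔
      ∃ b, a ≠ b ∧ ({a, b} : Finset V) ∈ L.faces ∧ e = s(a, b) := by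
  refine ⟨fun h => ?_, ?_⟩
  · obtain ⟨-, p, hp, ha, he⟩ := dra_adj_iff.1 h
    rcases hp with ⟨x, -, rfl⟩ | ⟨x, y, hxy, hne, rfl | rfl⟩ |
      ⟨t, ht, -, ⟨x, hx, y, hy, hne, rfl⟩ | ⟨x, -, y, -, -, rfl⟩ |
        ⟨x, -, y, -, z, -, -, -, -, rfl⟩⟩ <;>
    simp only [va, vm, vi, Finset.mem_insert, Finset.mem_singleton, Sum.inl.injEq,
      Sum.inr.injEq, reduceCtorEq, or_false, false_or] at ha he <;> subst ha he
    · exact ⟨y, hne, hxy, rfl⟩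
    · exact ⟨x, hne.symm, Finset.pair_comm x a ▸ hxy, Sym2.eq_swap⟩
    · exact ⟨y, hne, L.pair_mem_of_mem ht hx hy, rfl⟩
  · rintro ⟨b, hne, hab, rfl⟩
    exact dra_adj_iff.2 ⟨by simp [va, vm], _, halfEdge_mem_draGen hab hne, by simp, by simp⟩

lemma dra_adj_va_vi_iff {a x : V} {t : Finset V} :
    (dra L).skeleton.Adj (va a) (vi t x) ↔ x = a ∧ a ∈ t ∧ L.IsTriangle t := by
  refine ⟨fun h => ?_, ?_⟩
  · obtain ⟨-, p, hp, ha, hx⟩ := dra_adj_iff.1 h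
    rcases hp with ⟨y, -, rfl⟩ | ⟨y, z, -, -, rfl | rfl⟩ |
      ⟨u, hu, h3, ⟨y, hy, z, -, -, rfl⟩ | ⟨y, -, z, -, -, rfl⟩ |
        ⟨y, -, z, -, w, -, -, -, -, rfl⟩⟩ <;>
    simp only [va, vm, vi, Finset.mem_insert, Finset.mem_singleton, Sum.inl.injEq,
      Sum.inr.injEq, Prod.mk.injEq, reduceCtorEq, or_false, false_or] at ha hx
    obtain ⟨rfl, rfl⟩ := hx
    subst ha
    exact ⟨rfl, hy, hu, h3⟩
  · rintro ⟨rfl, hx, ht⟩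
    obtain ⟨y, hy, hyx⟩ := ht.exists_ne x
    exact dra_adj_iff.2 ⟨by simp [va, vi], _, corner_mem_draGen ht hx hy hyx.symm,
      by simp, by simp⟩

lemma dra_adj_vm_vi_iff {e : Sym2 V} {t : Finset V} {x : V} :
    (dra L).skeleton.Adj (vm e) (vi t x) ↔
      L.IsTriangle t ∧ x ∈ t ∧ ∃ y ∈ t, y ≠ x ∧ e = s(x, y) := by
  refine ⟨fun h => ?_, ?_⟩
  · obtain ⟨-, p, hp, he, hx⟩ := dra_adj_iff.1 h
    rcases hp with ⟨y, -, rfl⟩ | ⟨y, z, -, -, rfl | rfl⟩ |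
      ⟨u, hu, h3, ⟨y, hy, z, hz, hne, rfl⟩ | ⟨y, hy, z, hz, hne, rfl⟩ |
        ⟨y, -, z, -, w, -, -, -, -, rfl⟩⟩ <;>
    simp only [va, vm, vi, Finset.mem_insert, Finset.mem_singleton, Sum.inl.injEq,
      Sum.inr.injEq, Prod.mk.injEq, reduceCtorEq, or_false, false_or] at he hx <;> subst he
    · obtain ⟨rfl, rfl⟩ := hx
      exact ⟨⟨hu, h3⟩, hy, z, hz, hne.symm, rfl⟩
    · rcases hx with ⟨rfl, rfl⟩ | ⟨rfl, rfl⟩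
      · exact ⟨⟨hu, h3⟩, hy, z, hz, hne.symm, rfl⟩
      · exact ⟨⟨hu, h3⟩, hz, y, hy, hne, Sym2.eq_swap⟩
  · rintro ⟨ht, hx, y, hy, hyx, rfl⟩
    exact dra_adj_iff.2 ⟨by simp [vm, vi], _, side_mem_draGen ht hx hy hyx.symm,
      by simp, by simp⟩

lemma dra_adj_vi_vi_iff {t t' : Finset V} {x y : V} :
    (dra L).skeleton.Adj (vi t x) (vi t' y) ↔
      t' = t ∧ x ≠ y ∧ x ∈ t ∧ y ∈ t ∧ L.IsTriangle t := by
  refine ⟨fun h => ?_, ?_⟩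
  · obtain ⟨hvi, p, hp, hx, hy⟩ := dra_adj_iff.1 h
    have hne : x ≠ y ∨ t ≠ t' := by
      by_contra! h'
      exact hvi (by rw [h'.1, h'.2])
    rcases hp with ⟨z, -, rfl⟩ | ⟨z, w, -, -, rfl | rfl⟩ |
      ⟨u, hu, h3, ⟨z, hz, w, -, -, rfl⟩ | ⟨z, hz, w, hw, -, rfl⟩ |
        ⟨z, hz, w, hw, v, hv, -, -, -, rfl⟩⟩ <;>
    simp only [va, vm, vi, Finset.mem_insert, Finset.mem_singleton,
      Sum.inr.injEq, Prod.mk.injEq, reduceCtorEq, or_false, false_or] at hx hy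
    · obtain ⟨rfl, rfl⟩ := hx
      obtain ⟨rfl, rfl⟩ := hy
      simp at hne
    · rcases hx with ⟨rfl, rfl⟩ | ⟨rfl, rfl⟩ <;> rcases hy with ⟨rfl, rfl⟩ | ⟨rfl, rfl⟩ <;>
        simp_all [ASC.IsTriangle]
    · rcases hx with ⟨rfl, rfl⟩ | ⟨rfl, rfl⟩ | ⟨rfl, rfl⟩ <;>
        rcases hy with ⟨rfl, rfl⟩ | ⟨rfl, rfl⟩ | ⟨rfl, rfl⟩ <;>
        simp_all [ASC.IsTriangle]
  · rintro ⟨rfl, hxy, hx, hy, ht⟩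
    exact dra_adj_iff.2 ⟨by simp [vi, hxy], _, side_mem_draGen ht hx hy hxy, by simp, by simp⟩

end Adjacency

section Cliques

variable {L : ASC V}

lemma exists_draGen_of_corner {s : Finset (DVert V)} (hs : s.card = 3) {a x : V} {e : Sym2 V}
    {t : Finset V} (hax : (dra L).skeleton.Adj (va a) (vi t x))
    (hex : (dra L).skeleton.Adj (vm e) (vi t x)) (ha : va a ∈ s) (he : vm e ∈ s)
    (hx : vi t x ∈ s) : ∃ p ∈ draGen L, s ⊆ p := by
  obtain ⟨rfl, hat, ht⟩ := dra_adj_va_vi_iff.1 hax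
  obtain ⟨-, -, y, hy, hyx, rfl⟩ := dra_adj_vm_vi_iff.1 hex
  refine ⟨_, corner_mem_draGen ht hat hy hyx.symm, ?_⟩
  rw [Finset.eq_triple_of_card_eq_three hs ha hx he hax.ne (by simp [va, vm]) hex.ne.symm]

lemma exists_draGen_of_side {s : Finset (DVert V)} (hs : s.card = 3) {e : Sym2 V}
    {t t' : Finset V} {x y : V} (hxy : (dra L).skeleton.Adj (vi t x) (vi t' y))
    (hex : (dra L).skeleton.Adj (vm e) (vi t x)) (hey : (dra L).skeleton.Adj (vm e) (vi t' y))
    (he : vm e ∈ s) (hx : vi t x ∈ s) (hy : vi t' y ∈ s) : ∃ p ∈ draGen L, s ⊆ p := by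
  obtain ⟨rfl, hne, hxt, hyt, ht⟩ := dra_adj_vi_vi_iff.1 hxy
  obtain ⟨-, -, u, -, -, rfl⟩ := dra_adj_vm_vi_iff.1 hex
  obtain ⟨-, -, u', -, -, he'⟩ := dra_adj_vm_vi_iff.1 hey
  obtain rfl := Sym2.eq_of_mk_eq_mk_of_ne he' hne
  refine ⟨_, side_mem_draGen ht hxt hyt hne, ?_⟩
  rw [Finset.eq_triple_of_card_eq_three hs hx hy he hxy.ne hex.ne.symm hey.ne.symm]

lemma exists_draGen_of_center {s : Finset (DVert V)} (hs : s.card = 3) {t t' t'' : Finset V}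
    {x y z : V} (hxy : (dra L).skeleton.Adj (vi t x) (vi t' y))
    (hxz : (dra L).skeleton.Adj (vi t x) (vi t'' z))
    (hyz : (dra L).skeleton.Adj (vi t' y) (vi t'' z))
    (hx : vi t x ∈ s) (hy : vi t' y ∈ s) (hz : vi t'' z ∈ s) : ∃ p ∈ draGen L, s ⊆ p := by
  obtain ⟨rfl, nxy, hxt, hyt, ht⟩ := dra_adj_vi_vi_iff.1 hxy
  obtain ⟨rfl, nxz, -, hzt, -⟩ := dra_adj_vi_vi_iff.1 hxz
  obtain ⟨-, nyz, -⟩ := dra_adj_vi_vi_iff.1 hyz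
  refine ⟨_, center_mem_draGen ht hxt hyt hzt nxy nyz nxz, ?_⟩
  rw [Finset.eq_triple_of_card_eq_three hs hx hy hz hxy.ne hxz.ne hyz.ne]

lemma dra_not_adj_of_adj_va {a x y : V} {t t' : Finset V}
    (hx : (dra L).skeleton.Adj (va a) (vi t x)) (hy : (dra L).skeleton.Adj (va a) (vi t' y)) :
    ¬ (dra L).skeleton.Adj (vi t x) (vi t' y) := by
  obtain ⟨rfl, -⟩ := dra_adj_va_vi_iff.1 hx
  obtain ⟨rfl, -⟩ := dra_adj_va_vi_iff.1 hy
  exact fun h => (dra_adj_vi_vi_iff.1 h).2.1 rfl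

theorem exists_draGen_of_isNClique_three {s : Finset (DVert V)}
    (hs : (dra L).skeleton.IsNClique 3 s) : ∃ p ∈ draGen L, s ⊆ p := by
  obtain ⟨u, v, w, huv, huw, hvw, rfl⟩ := SimpleGraph.is3Clique_iff.1 hs
  have hvu := huv.symm
  have hwu := huw.symm
  have hwv := hvw.symm
  cases u using DVert.casesOn' <;> cases v using DVert.casesOn' <;>
    cases w using DVert.casesOn' <;>
  first
    | exact (dra_not_adj_va_va (by assumption)).elim
    | exact (dra_not_adj_vm_vm (by assumption)).elim
    | exact (dra_not_adj_of_adj_va huv huw hvw).elim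
    | exact (dra_not_adj_of_adj_va hvu hvw huw).elim
    | exact (dra_not_adj_of_adj_va hwu hwv huv).elim
    | exact exists_draGen_of_corner hs.2 (by assumption) (by assumption) (by simp)
        (by simp) (by simp)
    | exact exists_draGen_of_side hs.2 (by assumption) (by assumption) (by assumption)
        (by simp) (by simp) (by simp)
    | exact exists_draGen_of_center hs.2 huv huw hvw (by simp) (by simp) (by simp)

lemma card_le_three_of_mem_draGen {p : Finset (DVert V)} (hp : p ∈ draGen L) : p.card ≤ 3 := by
  rcases hp with ⟨x, -, rfl⟩ | ⟨x, y, -, -, rfl | rfl⟩ |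
    ⟨t, -, -, ⟨x, -, y, -, -, rfl⟩ | ⟨x, -, y, -, -, rfl⟩ | ⟨x, -, y, -, z, -, -, -, -, rfl⟩⟩
  · simp
  all_goals first | exact Finset.card_le_three | exact Finset.card_le_two.trans (by norm_num)

lemma draGen_not_forall_adj {p : Finset (DVert V)} (hp : p ∈ draGen L) (hcard : p.card = 3)
    (z : DVert V) : ¬ ∀ q ∈ p, (dra L).skeleton.Adj q z := by
  rcases hp with ⟨x, -, rfl⟩ | ⟨x, y, -, -, rfl | rfl⟩ |
    ⟨t, -, -, ⟨x, -, y, -, -, rfl⟩ | ⟨x, -, y, -, hxy, rfl⟩ |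
      ⟨x, hx, y, hy, w, hw, hxy, hyw, hxw, rfl⟩⟩
  · simp at hcard
  · have := Finset.card_le_two (a := va x) (b := vm s(x, y)); omega
  · have := Finset.card_le_two (a := va y) (b := vm s(x, y)); omega
  all_goals
    simp only [Finset.mem_insert, Finset.mem_singleton, forall_eq_or_imp, forall_eq]
    rintro ⟨h1, h2, h3⟩
  · cases z using DVert.casesOn' with
    | corner b => exact dra_not_adj_va_va h1
    | mid f => exact dra_not_adj_vm_vm h3
    | inner t' v =>
      obtain ⟨rfl, -⟩ := dra_adj_va_vi_iff.1 h1
      exact (dra_adj_vi_vi_iff.1 h2).2.1 rfl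
  · cases z using DVert.casesOn' with
    | corner b =>
      obtain ⟨rfl, -⟩ := dra_adj_va_vi_iff.1 h1.symm
      exact hxy (dra_adj_va_vi_iff.1 h2.symm).1.symm
    | mid f => exact dra_not_adj_vm_vm h3
    | inner t' v =>
      obtain ⟨-, hxv, -⟩ := dra_adj_vi_vi_iff.1 h1
      obtain ⟨-, hyv, -⟩ := dra_adj_vi_vi_iff.1 h2
      obtain ⟨-, -, u, -, -, he⟩ := dra_adj_vm_vi_iff.1 h3
      have hv : v ∈ s(x, y) := he ▸ Sym2.mem_mk_left v u
      rcases Sym2.mem_iff.1 hv with rfl | rfl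
      exacts [hxv rfl, hyv rfl]
  · cases z using DVert.casesOn' with
    | corner b =>
      obtain ⟨rfl, -⟩ := dra_adj_va_vi_iff.1 h1.symm
      exact hxy (dra_adj_va_vi_iff.1 h2.symm).1.symm
    | mid f =>
      obtain ⟨-, -, u, -, -, rfl⟩ := dra_adj_vm_vi_iff.1 h1.symm
      obtain ⟨-, -, u', -, -, he⟩ := dra_adj_vm_vi_iff.1 h2.symm
      obtain ⟨-, -, u'', -, -, he'⟩ := dra_adj_vm_vi_iff.1 h3.symm
      rw [Sym2.eq_of_mk_eq_mk_of_ne he hxy] at he'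
      have hw : w ∈ s(x, y) := he' ▸ Sym2.mem_mk_left w u''
      rcases Sym2.mem_iff.1 hw with rfl | rfl
      exacts [hxw rfl, hyw rfl]
    | inner t' v =>
      obtain ⟨rfl, hxv, -, hv, ht⟩ := dra_adj_vi_vi_iff.1 h1
      obtain ⟨-, hyv, -⟩ := dra_adj_vi_vi_iff.1 h2
      obtain ⟨-, hwv, -⟩ := dra_adj_vi_vi_iff.1 h3
      rw [Finset.eq_triple_of_card_eq_three ht.2 hx hy hw hxy hxw hyw] at hv
      simp only [Finset.mem_insert, Finset.mem_singleton] at hv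
      rcases hv with rfl | rfl | rfl
      exacts [hxv rfl, hyv rfl, hwv rfl]

theorem dra_cliqueFree_four : (dra L).skeleton.CliqueFree 4 := by
  intro s hs
  obtain ⟨z, s', hz, rfl, hs'⟩ := Finset.card_eq_succ.1 hs.2
  obtain ⟨p, hp, hsub⟩ :=
    exists_draGen_of_isNClique_three ⟨hs.1.subset (by simp), hs'⟩
  have hps : s' = p := Finset.eq_of_subset_of_card_le hsub (hs' ▸ card_le_three_of_mem_draGen hp)
  subst hps
  refine draGen_not_forall_adj hp hs' z fun q hq => hs.1 (by simp [hq]) (by simp) ?_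
  rintro rfl
  exact hz hq

end Cliques

section Squares

variable {L : ASC V}

lemma dra_eq_vm_of_adj_va_of_adj_va {x z : V} {b : DVert V} (hxz : x ≠ z)
    (hx : (dra L).skeleton.Adj (va x) b) (hz : (dra L).skeleton.Adj (va z) b) :
    b = vm s(x, z) := by
  cases b using DVert.casesOn' with
  | corner a => exact (dra_not_adj_va_va hx).elim
  | mid e =>
    obtain ⟨b, -, -, rfl⟩ := dra_adj_va_vm_iff.1 hx
    obtain ⟨b', -, -, he⟩ := dra_adj_va_vm_iff.1 hz
    rw [Sym2.eq_of_mk_eq_mk_of_ne he hxz]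
  | inner t w =>
    obtain ⟨rfl, -⟩ := dra_adj_va_vi_iff.1 hx
    exact absurd (dra_adj_va_vi_iff.1 hz).1 hxz

lemma dra_not_isChordlessSquare_va_va {x z : V} {b d : DVert V} :
    ¬ (dra L).skeleton.IsChordlessSquare (va x) b (va z) d := by
  intro h
  have hxz : x ≠ z := fun e => h.ne_ac (e ▸ rfl)
  exact h.ne_bd ((dra_eq_vm_of_adj_va_of_adj_va hxz h.adj_ab h.adj_bc.symm).trans
    (dra_eq_vm_of_adj_va_of_adj_va hxz h.adj_da.symm h.adj_cd).symm)

lemma dra_not_isChordlessSquare_va_vm_vi_vm {x w : V} {e f : Sym2 V} {t : Finset V} :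
    ¬ (dra L).skeleton.IsChordlessSquare (va x) (vm e) (vi t w) (vm f) := by
  intro h
  obtain ⟨ht, hw, u, -, -, rfl⟩ := dra_adj_vm_vi_iff.1 h.adj_bc
  obtain ⟨-, -, u', -, -, rfl⟩ := dra_adj_vm_vi_iff.1 h.adj_cd.symm
  obtain ⟨b, -, -, he⟩ := dra_adj_va_vm_iff.1 h.adj_ab
  obtain ⟨b', -, -, hf⟩ := dra_adj_va_vm_iff.1 h.adj_da.symm
  by_cases hwx : w = x
  · subst hwx
    exact h.not_adj_ac (dra_adj_va_vi_iff.2 ⟨rfl, hw, ht⟩)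
  · exact h.ne_bd (by rw [Sym2.eq_of_mk_eq_mk_of_ne he hwx, Sym2.eq_of_mk_eq_mk_of_ne hf hwx])

lemma dra_not_isChordlessSquare_vi_vm_vi_vm {w w' : V} {e f : Sym2 V} {t t' : Finset V} :
    ¬ (dra L).skeleton.IsChordlessSquare (vi t w) (vm e) (vi t' w') (vm f) := by
  intro h
  obtain ⟨ht, hw, u, hu, huw, rfl⟩ := dra_adj_vm_vi_iff.1 h.adj_ab.symm
  obtain ⟨ht', hw', u', hu', -, he⟩ := dra_adj_vm_vi_iff.1 h.adj_bc
  obtain ⟨-, -, v, hv, hvw, rfl⟩ := dra_adj_vm_vi_iff.1 h.adj_da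
  obtain ⟨-, -, v', hv', -, hf⟩ := dra_adj_vm_vi_iff.1 h.adj_cd.symm
  by_cases hww : w = w'
  · subst hww
    obtain rfl := Sym2.congr_right.1 he
    obtain rfl := Sym2.congr_right.1 hf
    have huv : u ≠ v := fun e => h.ne_bd (by rw [e])
    exact h.ne_ac (by rw [ht.eq_of_three_mem ht' hw hu hv hw' hu' hv' huw.symm hvw.symm huv])
  · exact h.ne_bd (by rw [Sym2.eq_of_mk_eq_mk_of_ne he hww, Sym2.eq_of_mk_eq_mk_of_ne hf hww])

lemma dra_not_isChordlessSquare_vi_vi_vi {a : DVert V} {x y z : V} {t t' t'' : Finset V} :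
    ¬ (dra L).skeleton.IsChordlessSquare a (vi t x) (vi t' y) (vi t'' z) := by
  intro h
  obtain ⟨rfl, -, hx, -, ht⟩ := dra_adj_vi_vi_iff.1 h.adj_bc
  obtain ⟨rfl, -, -, hz, -⟩ := dra_adj_vi_vi_iff.1 h.adj_cd
  have hxz : x ≠ z := fun e => h.ne_bd (e ▸ rfl)
  exact h.not_adj_bd (dra_adj_vi_vi_iff.2 ⟨rfl, hxz, hx, hz, ht⟩)

lemma dra_not_isChordlessSquare_va_vm_vi_vi {x w w' : V} {e : Sym2 V} {t t' : Finset V} :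
    ¬ (dra L).skeleton.IsChordlessSquare (va x) (vm e) (vi t w) (vi t' w') := by
  intro h
  obtain ⟨rfl, hx, ht⟩ := dra_adj_va_vi_iff.1 h.adj_da.symm
  obtain ⟨rfl, hwx, hw, -⟩ := dra_adj_vi_vi_iff.1 h.adj_cd
  obtain ⟨-, -, u, -, -, rfl⟩ := dra_adj_vm_vi_iff.1 h.adj_bc
  obtain ⟨b, -, -, he⟩ := dra_adj_va_vm_iff.1 h.adj_ab
  obtain rfl := Sym2.eq_of_mk_eq_mk_of_ne he hwx
  exact h.not_adj_bd (dra_adj_vm_vi_iff.2 ⟨ht, hx, w, hw, hwx, Sym2.eq_swap⟩)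

lemma dra_not_isChordlessSquare_va_vi_vm_vi {x w w' : V} {e : Sym2 V} {t t' : Finset V} :
    ¬ (dra L).skeleton.IsChordlessSquare (va x) (vi t w) (vm e) (vi t' w') := by
  intro h
  obtain ⟨rfl, hx, ht⟩ := dra_adj_va_vi_iff.1 h.adj_ab
  obtain ⟨-, -, u, hu, hux, rfl⟩ := dra_adj_vm_vi_iff.1 h.adj_bc.symm
  exact h.not_adj_ac (dra_adj_va_vm_iff.2 ⟨u, hux.symm, L.pair_mem_of_mem ht.1 hx hu, rfl⟩)

theorem dra_not_isChordlessSquare (a b c d : DVert V) :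
    ¬ (dra L).skeleton.IsChordlessSquare a b c d := by
  intro h
  cases a using DVert.casesOn' <;> cases b using DVert.casesOn' <;>
    cases c using DVert.casesOn' <;> cases d using DVert.casesOn' <;>
  first
    | exact dra_not_adj_va_va h.adj_ab
    | exact dra_not_adj_va_va h.adj_bc
    | exact dra_not_adj_va_va h.adj_cd
    | exact dra_not_adj_va_va h.adj_da
    | exact dra_not_adj_vm_vm h.adj_ab
    | exact dra_not_adj_vm_vm h.adj_bc
    | exact dra_not_adj_vm_vm h.adj_cd
    | exact dra_not_adj_vm_vm h.adj_da
    | exact dra_not_isChordlessSquare_va_va h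
    | exact dra_not_isChordlessSquare_va_va h.rotate
    | exact dra_not_isChordlessSquare_va_vm_vi_vm h
    | exact dra_not_isChordlessSquare_va_vm_vi_vm h.rotate
    | exact dra_not_isChordlessSquare_va_vm_vi_vm h.rotate.rotate
    | exact dra_not_isChordlessSquare_va_vm_vi_vm h.rotate.rotate.rotate
    | exact dra_not_isChordlessSquare_vi_vm_vi_vm h
    | exact dra_not_isChordlessSquare_vi_vm_vi_vm h.rotate
    | exact dra_not_isChordlessSquare_vi_vi_vi h
    | exact dra_not_isChordlessSquare_vi_vi_vi h.rotate
    | exact dra_not_isChordlessSquare_vi_vi_vi h.rotate.rotate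
    | exact dra_not_isChordlessSquare_vi_vi_vi h.rotate.rotate.rotate
    | exact dra_not_isChordlessSquare_va_vm_vi_vi h
    | exact dra_not_isChordlessSquare_va_vm_vi_vi h.rotate
    | exact dra_not_isChordlessSquare_va_vm_vi_vi h.rotate.rotate
    | exact dra_not_isChordlessSquare_va_vm_vi_vi h.rotate.rotate.rotate
    | exact dra_not_isChordlessSquare_va_vm_vi_vi h.reflect
    | exact dra_not_isChordlessSquare_va_vm_vi_vi h.rotate.reflect
    | exact dra_not_isChordlessSquare_va_vm_vi_vi h.rotate.rotate.reflect
    | exact dra_not_isChordlessSquare_va_vm_vi_vi h.rotate.rotate.rotate.reflect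
    | exact dra_not_isChordlessSquare_va_vi_vm_vi h
    | exact dra_not_isChordlessSquare_va_vi_vm_vi h.rotate
    | exact dra_not_isChordlessSquare_va_vi_vm_vi h.rotate.rotate
    | exact dra_not_isChordlessSquare_va_vi_vm_vi h.rotate.rotate.rotate

end Squares

theorem dra_flag_noSquare_general (L : ASC V) :
    (dra L).Flag ∧ (dra L).NoSquare := by
  refine ⟨(dra L).flag_of_cliques (fun s hs => ?_) dra_cliqueFree_four,
    (dra L).noSquare_of_forall_not_isChordlessSquare dra_not_isChordlessSquare⟩
  obtain ⟨p, hp, hsp⟩ := exists_draGen_of_isNClique_three hs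
  exact ⟨Finset.card_pos.1 (by rw [hs.card_eq]; norm_num), p, hp, hsp⟩

/-- The Dranishnikov subdivision of a 2-dimensional simplicial complex is a flag
simplicial complex satisfying the no-□ condition. -/
theorem dra_flag_noSquare (L : ASC V) (h2 : ∀ s ∈ L.faces, s.card ≤ 3) :
    (dra L).Flag ∧ (dra L).NoSquare :=
  dra_flag_noSquare_general L
end

section
/- If Γ is a 1-dimensional subcomplex of a 2-dimensional simplicial complex L, then the subdivision Γ^𝔡 (subdividing each edge of Γ into two) is a full subcomplex of the Dranishnikov subdivision L^𝔡. -/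
variable {V : Type} [DecidableEq V]

/-- If `Γ` is a 1-dimensional subcomplex of a 2-dimensional simplicial complex `L`, then
the subdivision `Γ^𝔡` (subdividing each edge of `Γ` into two) is a subcomplex of the
Dranishnikov subdivision `L^𝔡`, and it is full: every face of `L^𝔡` all of whose
vertices are vertices of `Γ^𝔡` belongs to `Γ^𝔡`. -/
theorem dra_subcomplex_full (Γ L : ASC V)
    (hsub : Γ.faces ⊆ L.faces)
    (hΓ1 : ∀ s ∈ Γ.faces, s.card ≤ 2)
    (hL2 : ∀ s ∈ L.faces, s.card ≤ 3) :
    (dra Γ).faces ⊆ (dra L).faces ∧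
    ∀ q ∈ (dra L).faces,
      (∀ x ∈ q, ({x} : Finset (DVert V)) ∈ (dra Γ).faces) → q ∈ (dra Γ).faces := by
  have hgen : draGen Γ ⊆ draGen L := by
    rintro p (⟨a, ha, rfl⟩ | ⟨a, b, hab, hne, h⟩ | ⟨t, ht, h3, -⟩)
    · exact Or.inl ⟨a, hsub ha, rfl⟩
    · exact Or.inr (Or.inl ⟨a, b, hsub hab, hne, h⟩)
    · have := hΓ1 t ht; omega
  refine ⟨?_, ?_⟩
  · rintro q ⟨hne, p, hp, hqp⟩
    exact ⟨hne, p, hgen hp, hqp⟩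
  · rintro q ⟨hne, p, hp, hqp⟩ hvert
    have hvaq : ∀ a : V, va a ∈ q → ({a} : Finset V) ∈ Γ.faces := by
      intro a haq
      obtain ⟨-, p', hp', hs⟩ := hvert _ haq
      have hap : va a ∈ p' := hs (Finset.mem_singleton_self _)
      rcases hp' with ⟨a', ha', rfl⟩ | ⟨a', b', hab', hne', (rfl | rfl)⟩ | ⟨t, ht, h3, -⟩
      · simp only [va, Finset.mem_singleton, Sum.inl.injEq] at hap
        subst hap; exact ha'
      · simp only [va, vm, Finset.mem_insert, Finset.mem_singleton, Sum.inl.injEq,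
          reduceCtorEq, or_false] at hap
        subst hap
        exact Γ.down_closed _ hab' {a} (by simp) ⟨a, Finset.mem_singleton_self a⟩
      · simp only [va, vm, Finset.mem_insert, Finset.mem_singleton, Sum.inl.injEq,
          reduceCtorEq, or_false] at hap
        subst hap
        exact Γ.down_closed _ hab' {a} (by simp) ⟨a, Finset.mem_singleton_self a⟩
      · have := hΓ1 t ht; omega
    have hvmq : ∀ e : Sym2 V, vm e ∈ q →
        ∃ a b : V, a ≠ b ∧ e = s(a, b) ∧ ({a, b} : Finset V) ∈ Γ.faces := by
      intro e heq
      obtain ⟨-, p', hp', hs⟩ := hvert _ heq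
      have hep : vm e ∈ p' := hs (Finset.mem_singleton_self _)
      rcases hp' with ⟨a', ha', rfl⟩ | ⟨a', b', hab', hne', (rfl | rfl)⟩ | ⟨t, ht, h3, -⟩
      · simp [va, vm] at hep
      · simp only [va, vm, Finset.mem_insert, Finset.mem_singleton, Sum.inr.injEq,
          Sum.inl.injEq, reduceCtorEq, false_or] at hep
        exact ⟨a', b', hne', hep, hab'⟩
      · simp only [va, vm, Finset.mem_insert, Finset.mem_singleton, Sum.inr.injEq,
          Sum.inl.injEq, reduceCtorEq, false_or] at hep
        exact ⟨a', b', hne', hep, hab'⟩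
      · have := hΓ1 t ht; omega
    have hviq : ∀ (t : Finset V) (x : V), vi t x ∉ q := by
      intro t x hxq
      obtain ⟨-, p', hp', hs⟩ := hvert _ hxq
      have hxp : vi t x ∈ p' := hs (Finset.mem_singleton_self _)
      rcases hp' with ⟨a', ha', rfl⟩ | ⟨a', b', hab', hne', (rfl | rfl)⟩ | ⟨t', ht', h3, -⟩
      · simp [va, vm, vi] at hxp
      · simp [va, vm, vi] at hxp
      · simp [va, vm, vi] at hxp
      · have := hΓ1 t' ht'; omega
    have vertCase : ∀ a : V, q ⊆ {va a} → q ∈ (dra Γ).faces := by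
      intro a hqa
      obtain ⟨u, hu⟩ := hne
      have hu' := hqa hu
      rw [Finset.mem_singleton] at hu'
      subst hu'
      exact ⟨⟨_, hu⟩, {va a}, Or.inl ⟨a, hvaq a hu, rfl⟩, hqa⟩
    have edgeCase : ∀ x y : V, x ≠ y → q ⊆ {va x, vm s(x, y)} → q ∈ (dra Γ).faces := by
      intro x y hxy hqs
      by_cases hm : vm s(x, y) ∈ q
      · obtain ⟨a, b, hne', he, hab⟩ := hvmq _ hm
        have hxyΓ : ({x, y} : Finset V) ∈ Γ.faces := by
          rcases Sym2.eq_iff.mp he with ⟨rfl, rfl⟩ | ⟨rfl, rfl⟩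
          · exact hab
          · rwa [Finset.pair_comm]
        exact ⟨hne, _, Or.inr (Or.inl ⟨x, y, hxyΓ, hxy, Or.inl rfl⟩), hqs⟩
      · apply vertCase x
        intro u hu
        have := hqs hu
        rw [Finset.mem_insert, Finset.mem_singleton] at this
        rcases this with rfl | rfl
        · exact Finset.mem_singleton_self _
        · exact absurd hu hm
    rcases hp with ⟨a, ha, rfl⟩ | ⟨a, b, hab, hne2, (rfl | rfl)⟩ |
        ⟨t, ht, h3, (⟨x, hx, y, hy, hxy, rfl⟩ | ⟨x, hx, y, hy, hxy, rfl⟩ |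
          ⟨x, hx, y, hy, z, hz, hxy, hyz, hxz, rfl⟩)⟩
    · exact vertCase a hqp
    · exact edgeCase a b hne2 hqp
    · refine edgeCase b a hne2.symm ?_
      have hswap : s(a, b) = s(b, a) := Sym2.eq_swap
      rwa [hswap] at hqp
    · refine edgeCase x y hxy ?_
      intro u hu
      have := hqp hu
      rw [Finset.mem_insert, Finset.mem_insert, Finset.mem_singleton] at this
      rcases this with rfl | rfl | rfl
      · exact Finset.mem_insert_self _ _
      · exact absurd hu (hviq t x)
      · exact Finset.mem_insert_of_mem (Finset.mem_singleton_self _)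
    · refine edgeCase x y hxy ?_
      intro u hu
      have := hqp hu
      rw [Finset.mem_insert, Finset.mem_insert, Finset.mem_singleton] at this
      rcases this with rfl | rfl | rfl
      · exact absurd hu (hviq t x)
      · exact absurd hu (hviq t y)
      · exact Finset.mem_insert_of_mem (Finset.mem_singleton_self _)
    · obtain ⟨u, hu⟩ := hne
      have := hqp hu
      rw [Finset.mem_insert, Finset.mem_insert, Finset.mem_singleton] at this
      rcases this with rfl | rfl | rfl
      · exact absurd hu (hviq t x)
      · exact absurd hu (hviq t y)
      · exact absurd hu (hviq t z)
end
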